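/- Let 0 < a ≤ b ≤ 2, let α : ℝ → [a,b] be continuous, let u ∈ ℝ and h₀ > 0. Let f : ℝ × ℝ → ℝ with f(t,·) ∈ F_{a,b} for all t, and let k : ℝ × ℝ → ℝ be jointly measurable with k(t,·) ∈ F_{a,b} for all t, such that for every t ∈ ℝ, lim_{r→0⁺} ∫_ℝ | (f(u+rt, u+rz) − f(u, u+rz)) / r^{h₀ − 1/α(u+rz)} − k(t,z) |^{a,b} dz = 0. Then for every m ∈ ℕ, all t₁,…,t_m ∈ ℝ and all θ₁,…,θ_m ∈ ℝ, lim_{r→0⁺} ∫_ℝ | Σ_{j=1}^m θ_j r^{−h₀ + 1/α(rz+u)} (f(u+rt_j, rz+u) − f(u, rz+u)) |^{α(rz+u)} dz = ∫_ℝ | Σ_{j=1}^m θ_j k(t_j, z) |^{α(u)} dz. -/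

import Mathlib

open MeasureTheory Filter Set Topology ProbabilityTheory BoundedContinuousFunction

noncomputable section

/-- Membership in `F_α`: `f` is measurable and either a.e. zero or there is a (unique)
`λ > 0` with `∫ |f(x)/λ|^{α(x)} dx = 1`. -/
def MemFalpha (α f : ℝ → ℝ) : Prop :=
  Measurable f ∧ (f =ᵐ[volume] (0 : ℝ → ℝ) ∨ ∃ lam > (0:ℝ), ∫ x : ℝ, |f x / lam| ^ α x = 1)

/-- The quasinorm `‖f‖_α`, the unique `λ > 0` with `∫ |f(x)/λ|^{α(x)} dx = 1`
(and `0` if no such `λ` exists, e.g. if `f = 0` a.e.). -/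
def alphaNorm (α f : ℝ → ℝ) : ℝ :=
  sInf {lam : ℝ | 0 < lam ∧ ∫ x : ℝ, |f x / lam| ^ α x = 1}

/-- `|s|^{a,b} = max{|s|^a, |s|^b}`. -/
def pab (a b s : ℝ) : ℝ := max (|s| ^ a) (|s| ^ b)

/-- Membership in `F_{a,b}`: measurable with `∫ |f(x)|^{a,b} dx < ∞`. -/
def MemFab (a b : ℝ) (f : ℝ → ℝ) : Prop :=
  Measurable f ∧ Integrable (fun x : ℝ => pab a b (f x))

/-- The norm `‖f‖_p = (∫ |f(x)|^p dx)^{1/p}`. -/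
def pNorm (p : ℝ) (f : ℝ → ℝ) : ℝ := (∫ x : ℝ, |f x| ^ p) ^ (1 / p)

/-- Membership in `E₀`: Lebesgue measurable with finite Lebesgue measure. -/
def MemE0 (A : Set ℝ) : Prop := MeasurableSet A ∧ volume A < ⊤

/-!
Write `q_r(t, ·)` for the rescaled increments, `G_r = ∑ⱼ θⱼ q_r(tⱼ, ·)` and
`K = ∑ⱼ θⱼ k(tⱼ, ·)`. Since `|x + y|^{a,b} ≤ 2^b (|x|^{a,b} + |y|^{a,b})` and
`|xy|^{a,b} ≤ |x|^{a,b} |y|^{a,b}`, the convergence `∫ |q_r(t, ·) - k(t, ·)|^{a,b} → 0` passes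
to `∫ |G_r - K|^{a,b} → 0`. Uniformly in `c ∈ [a, b]` one has
`||x|^c - |y|^c| ≤ ε |y|^c + C_ε |x - y|^c`, hence `∫ |G_r|^{α_r} - ∫ |K|^{α_r} → 0` for
`α_r(z) = α(u + rz)`, and `∫ |K|^{α_r} → ∫ |K|^{α(u)}` by dominated convergence with
dominant `|K|^{a,b}`.
-/

section

variable {a b : ℝ}

lemma add_rpow_le_weighted {s t c δ : ℝ} (hs : 0 ≤ s) (ht : 0 ≤ t) (hc : 0 ≤ c)
    (hcb : c ≤ b) (hδ : 0 < δ) :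
    (s + t) ^ c ≤ (1 + δ) ^ b * s ^ c + ((1 + δ) / δ) ^ b * t ^ c := by
  have hmax : s + t ≤ max ((1 + δ) * s) ((1 + δ) / δ * t) := by
    rcases le_total t (δ * s) with h | h
    · exact le_max_of_le_left (by linarith)
    · refine le_max_of_le_right ?_
      rw [div_mul_eq_mul_div, le_div_iff₀ hδ]
      nlinarith
  calc (s + t) ^ c ≤ (max ((1 + δ) * s) ((1 + δ) / δ * t)) ^ c :=
        Real.rpow_le_rpow (by positivity) hmax hc
    _ = max (((1 + δ) * s) ^ c) (((1 + δ) / δ * t) ^ c) :=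
        Real.rpow_max (by positivity) (by positivity) hc
    _ ≤ ((1 + δ) * s) ^ c + ((1 + δ) / δ * t) ^ c :=
        max_le_add_of_nonneg (by positivity) (by positivity)
    _ = (1 + δ) ^ c * s ^ c + ((1 + δ) / δ) ^ c * t ^ c := by
        rw [Real.mul_rpow (by positivity) hs, Real.mul_rpow (by positivity) ht]
    _ ≤ (1 + δ) ^ b * s ^ c + ((1 + δ) / δ) ^ b * t ^ c := by
        gcongr
        · linarith
        · rw [le_div_iff₀ hδ]; linarith

lemma exists_abs_rpow_sub_rpow_le (hb : 0 ≤ b) {ε : ℝ} (hε : 0 < ε) :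
    ∃ C ≥ 0, ∀ c ∈ Icc 0 b, ∀ x y : ℝ,
      |(|x| ^ c - |y| ^ c)| ≤ ε * |y| ^ c + C * |x - y| ^ c := by
  have hcont : Tendsto (fun δ : ℝ => ((1 + δ) ^ b - 1) * 2 ^ b) (𝓝[>] 0) (𝓝 0) := by
    have : Continuous (fun δ : ℝ => ((1 + δ) ^ b - 1) * 2 ^ b) :=
      (((continuous_const.add continuous_id).rpow_const fun _ => Or.inr hb).sub
        continuous_const).mul continuous_const
    simpa using (this.tendsto 0).mono_left nhdsWithin_le_nhds
  -- `δ` makes the excess `(1 + δ)^b - 1` of the weight small even after the factor `2^b`, which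
  -- enters through the crude split `|x|^c ≤ 2^b (|y|^c + |x - y|^c)` (weight `1`).
  obtain ⟨δ, hδε, hδ⟩ := ((hcont.eventually (gt_mem_nhds hε)).and self_mem_nhdsWithin).exists
  have hδ : 0 < δ := hδ
  have hη : 0 ≤ (1 + δ) ^ b - 1 := sub_nonneg.2 (Real.one_le_rpow (by linarith) hb)
  have h2b : 1 ≤ (2 : ℝ) ^ b := Real.one_le_rpow (by norm_num) hb
  refine ⟨ε + ((1 + δ) / δ) ^ b, by positivity, fun c hc x y => ?_⟩
  have hsplit : ∀ {d : ℝ}, 0 < d → ∀ x y : ℝ,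
      |x| ^ c ≤ (1 + d) ^ b * |y| ^ c + ((1 + d) / d) ^ b * |x - y| ^ c := fun hd x y =>
    (Real.rpow_le_rpow (abs_nonneg x) (by linarith [abs_sub_abs_le_abs_sub x y]) hc.1).trans
      (add_rpow_le_weighted (abs_nonneg y) (abs_nonneg _) hc.1 hc.2 hd)
  have hxy := hsplit hδ x y
  have hyx := hsplit hδ y x
  have hx2 := hsplit one_pos x y
  rw [abs_sub_comm] at hyx
  norm_num at hx2
  have hB : 0 ≤ |y| ^ c := by positivity
  have hE : 0 ≤ |x - y| ^ c := by positivity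
  rw [abs_le]
  constructor
  · nlinarith [mul_le_mul_of_nonneg_left hx2 hη,
      mul_le_mul_of_nonneg_right hδε.le (add_nonneg hB hE)]
  · nlinarith [mul_le_mul_of_nonneg_right (le_mul_of_one_le_right hη h2b) hB,
      mul_le_mul_of_nonneg_right hδε.le hB]

lemma min_rpow_le_rpow {x e e₁ e₂ : ℝ} (hx : 0 < x) (he : e ∈ Icc e₁ e₂) :
    min (x ^ e₁) (x ^ e₂) ≤ x ^ e := by
  rcases le_total x 1 with h | h
  · exact min_le_of_right_le (Real.rpow_le_rpow_of_exponent_ge hx h he.2)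
  · exact min_le_of_left_le (Real.rpow_le_rpow_of_exponent_le h he.1)

lemma pab_nonneg (a b s : ℝ) : 0 ≤ pab a b s :=
  le_max_of_le_left (Real.rpow_nonneg (abs_nonneg s) a)

lemma measurable_pab : Measurable (pab a b) := by
  unfold pab; fun_prop

lemma pab_zero (ha : 0 < a) (hab : a ≤ b) : pab a b 0 = 0 := by
  simp [pab, Real.zero_rpow ha.ne', Real.zero_rpow (ha.trans_le hab).ne']

lemma rpow_le_pab (ha : 0 ≤ a) {c : ℝ} (hc : c ∈ Icc a b) (s : ℝ) :
    |s| ^ c ≤ pab a b s := by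
  rcases le_total |s| 1 with hs | hs
  · exact le_max_of_le_left (Real.rpow_le_rpow_of_exponent_ge' (abs_nonneg s) hs ha hc.1)
  · exact le_max_of_le_right (Real.rpow_le_rpow_of_exponent_le hs hc.2)

lemma pab_le_pab (ha : 0 ≤ a) (hab : a ≤ b) {s t : ℝ} (h : |s| ≤ |t|) :
    pab a b s ≤ pab a b t :=
  max_le_max (Real.rpow_le_rpow (abs_nonneg s) h ha)
    (Real.rpow_le_rpow (abs_nonneg s) h (ha.trans hab))

lemma pab_mul_le (ha : 0 ≤ a) (hab : a ≤ b) (s t : ℝ) :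
    pab a b (s * t) ≤ pab a b s * pab a b t := by
  have key : ∀ c ∈ Icc a b, |s * t| ^ c ≤ pab a b s * pab a b t := fun c hc => by
    rw [abs_mul, Real.mul_rpow (abs_nonneg s) (abs_nonneg t)]
    exact mul_le_mul (rpow_le_pab ha hc s) (rpow_le_pab ha hc t) (by positivity) (pab_nonneg a b s)
  exact max_le (key a ⟨le_rfl, hab⟩) (key b ⟨hab, le_rfl⟩)

lemma pab_add_le (ha : 0 ≤ a) (hab : a ≤ b) (s t : ℝ) :
    pab a b (s + t) ≤ 2 ^ b * (pab a b s + pab a b t) := by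
  have key : ∀ c ∈ Icc a b, |s + t| ^ c ≤ 2 ^ b * (pab a b s + pab a b t) := fun c hc => by
    have hc0 : 0 ≤ c := ha.trans hc.1
    calc |s + t| ^ c ≤ (|s| + |t|) ^ c := Real.rpow_le_rpow (abs_nonneg _) (abs_add_le s t) hc0
      _ ≤ (1 + 1) ^ b * |s| ^ c + ((1 + 1) / 1) ^ b * |t| ^ c :=
          add_rpow_le_weighted (abs_nonneg s) (abs_nonneg t) hc0 hc.2 one_pos
      _ ≤ 2 ^ b * (pab a b s + pab a b t) := by
          norm_num only [mul_add]
          gcongr <;> exact rpow_le_pab ha hc _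
  exact max_le (key a ⟨le_rfl, hab⟩) (key b ⟨hab, le_rfl⟩)

lemma pab_sub_le (ha : 0 ≤ a) (hab : a ≤ b) (s t : ℝ) :
    pab a b (s - t) ≤ 2 ^ b * (pab a b s + pab a b t) := by
  simpa [sub_eq_add_neg, pab] using pab_add_le ha hab s (-t)

lemma pab_sum_mul_le {ι : Type*} (ha : 0 < a) (hab : a ≤ b) (s : Finset ι) (θ x : ι → ℝ) :
    pab a b (∑ j ∈ s, θ j * x j) ≤
      (2 ^ b) ^ s.card * ∑ j ∈ s, pab a b (θ j) * pab a b (x j) := by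
  classical
  have h2b : 1 ≤ (2 : ℝ) ^ b := Real.one_le_rpow (by norm_num) (ha.le.trans hab)
  induction s using Finset.induction_on with
  | empty => simp [pab_zero ha hab]
  | insert i s hi ih =>
    rw [Finset.sum_insert hi, Finset.sum_insert hi, Finset.card_insert_of_notMem hi, pow_succ]
    have hpow : 1 ≤ (2 ^ b : ℝ) ^ s.card := one_le_pow₀ h2b
    calc pab a b (θ i * x i + ∑ j ∈ s, θ j * x j)
        ≤ 2 ^ b * (pab a b (θ i) * pab a b (x i) +
            (2 ^ b) ^ s.card * ∑ j ∈ s, pab a b (θ j) * pab a b (x j)) :=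
          (pab_add_le ha.le hab _ _).trans (by gcongr; exact pab_mul_le ha.le hab _ _)
      _ ≤ 2 ^ b * ((2 ^ b) ^ s.card * (pab a b (θ i) * pab a b (x i)) +
            (2 ^ b) ^ s.card * ∑ j ∈ s, pab a b (θ j) * pab a b (x j)) := by
          have := le_mul_of_one_le_left
            (mul_nonneg (pab_nonneg a b (θ i)) (pab_nonneg a b (x i))) hpow
          gcongr
      _ = _ := by ring

lemma MemFab.sub (ha : 0 ≤ a) (hab : a ≤ b) {f g : ℝ → ℝ} (hf : MemFab a b f)
    (hg : MemFab a b g) :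
    MemFab a b (fun x => f x - g x) :=
  ⟨hf.1.sub hg.1, ((hf.2.add hg.2).const_mul (2 ^ b)).mono'
    (measurable_pab.comp (hf.1.sub hg.1)).aestronglyMeasurable
    (.of_forall fun x => by
      simpa [abs_of_nonneg (pab_nonneg a b _)] using pab_sub_le ha hab (f x) (g x))⟩

lemma MemFab.sum_mul {ι : Type*} (ha : 0 < a) (hab : a ≤ b) (s : Finset ι) (θ : ι → ℝ)
    {g : ι → ℝ → ℝ} (hg : ∀ j ∈ s, MemFab a b (g j)) :
    MemFab a b (fun x => ∑ j ∈ s, θ j * g j x) := by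
  have hm : Measurable (fun x => ∑ j ∈ s, θ j * g j x) :=
    Finset.measurable_sum _ fun j hj => (hg j hj).1.const_mul (θ j)
  refine ⟨hm, ((integrable_finsetSum s fun j hj => (hg j hj).2.const_mul (pab a b (θ j))).const_mul
    ((2 ^ b) ^ s.card)).mono' (measurable_pab.comp hm).aestronglyMeasurable
    (.of_forall fun x => ?_)⟩
  simpa [abs_of_nonneg (pab_nonneg a b _)] using pab_sum_mul_le ha hab s θ (fun j => g j x)

lemma MemFab.comp_add_mul {f : ℝ → ℝ} (hf : MemFab a b f) (u : ℝ) {r : ℝ} (hr : r ≠ 0) :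
    MemFab a b (fun z => f (u + r * z)) :=
  ⟨hf.1.comp (by fun_prop), (hf.2.comp_add_left u).comp_mul_left' hr⟩

lemma MemFab.div_of_le_abs (ha : 0 ≤ a) (hab : a ≤ b) {f d : ℝ → ℝ} (hf : MemFab a b f)
    (hd : Measurable d) {m : ℝ} (hm : 0 < m) (hdm : ∀ x, m ≤ |d x|) :
    MemFab a b (fun x => f x / d x) := by
  have hmeas : Measurable (fun x => f x / d x) := hf.1.div hd
  refine ⟨hmeas, (hf.2.mul_const (pab a b m⁻¹)).mono'
    (measurable_pab.comp hmeas).aestronglyMeasurable (.of_forall fun x => ?_)⟩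
  rw [Real.norm_eq_abs, abs_of_nonneg (pab_nonneg a b _)]
  simp only [div_eq_mul_inv]
  refine (pab_mul_le ha hab _ _).trans (mul_le_mul_of_nonneg_left ?_ (pab_nonneg a b _))
  refine pab_le_pab ha hab ?_
  rw [abs_inv, abs_inv, abs_of_pos hm]
  exact inv_anti₀ hm (hdm x)

lemma MemFab.div_rpow (ha : 0 ≤ a) (hab : a ≤ b) {g e : ℝ → ℝ} (hg : MemFab a b g)
    (he : Measurable e) {e₁ e₂ r : ℝ} (hr : 0 < r) (he₁₂ : ∀ x, e x ∈ Icc e₁ e₂) :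
    MemFab a b (fun x => g x / r ^ e x) :=
  hg.div_of_le_abs ha hab (measurable_const.pow he)
    (lt_min (Real.rpow_pos_of_pos hr _) (Real.rpow_pos_of_pos hr _))
    fun x => (min_rpow_le_rpow hr (he₁₂ x)).trans (le_abs_self _)

section Convergence

variable {Ω ι : Type*} [MeasurableSpace Ω] {μ : Measure Ω} {l : Filter ι}

lemma integral_pab_sum_mul_le (ha : 0 < a) (hab : a ≤ b) {κ : Type*} (s : Finset κ)
    (θ : κ → ℝ) {g : κ → Ω → ℝ} (hg : ∀ j ∈ s, Integrable (fun x => pab a b (g j x)) μ) :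
    ∫ x, pab a b (∑ j ∈ s, θ j * g j x) ∂μ ≤
      (2 ^ b) ^ s.card * ∑ j ∈ s, pab a b (θ j) * ∫ x, pab a b (g j x) ∂μ := by
  have hint : ∀ j ∈ s, Integrable (fun x => pab a b (θ j) * pab a b (g j x)) μ :=
    fun j hj => (hg j hj).const_mul _
  calc ∫ x, pab a b (∑ j ∈ s, θ j * g j x) ∂μ
      ≤ ∫ x, (2 ^ b) ^ s.card * ∑ j ∈ s, pab a b (θ j) * pab a b (g j x) ∂μ :=
        integral_mono_of_nonneg (.of_forall fun x => pab_nonneg a b _)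
          ((integrable_finsetSum s hint).const_mul _)
          (.of_forall fun x => pab_sum_mul_le ha hab s θ (fun j => g j x))
    _ = _ := by
        rw [integral_const_mul, integral_finsetSum s hint]
        simp only [integral_const_mul]

lemma tendsto_integral_pab_sum_mul (ha : 0 < a) (hab : a ≤ b) {κ : Type*} (s : Finset κ)
    (θ : κ → ℝ) {g : ι → κ → Ω → ℝ}
    (hg : ∀ j ∈ s, ∀ᶠ i in l, Integrable (fun x => pab a b (g i j x)) μ)
    (hlim : ∀ j ∈ s, Tendsto (fun i => ∫ x, pab a b (g i j x) ∂μ) l (𝓝 0)) :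
    Tendsto (fun i => ∫ x, pab a b (∑ j ∈ s, θ j * g i j x) ∂μ) l (𝓝 0) := by
  have hbound : Tendsto
      (fun i => (2 ^ b) ^ s.card * ∑ j ∈ s, pab a b (θ j) * ∫ x, pab a b (g i j x) ∂μ) l (𝓝 0) := by
    simpa using (tendsto_finsetSum s fun j hj => (hlim j hj).const_mul (pab a b (θ j))).const_mul
      (((2 : ℝ) ^ b) ^ s.card)
  refine tendsto_of_tendsto_of_tendsto_of_le_of_le' tendsto_const_nhds hbound
    (.of_forall fun i => integral_nonneg fun x => pab_nonneg a b _) ?_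
  filter_upwards [(Filter.eventually_all_finset s).2 hg] with i hi
  exact integral_pab_sum_mul_le ha hab s θ hi

lemma integrable_abs_rpow_of_integrable_pab (ha : 0 ≤ a) {β g : Ω → ℝ}
    (hβm : Measurable β) (hβ : ∀ x, β x ∈ Icc a b) (hg : Measurable g)
    (hgi : Integrable (fun x => pab a b (g x)) μ) :
    Integrable (fun x => |g x| ^ β x) μ :=
  hgi.mono' (hg.abs.pow hβm).aestronglyMeasurable (.of_forall fun x => by
    rw [Real.norm_eq_abs, abs_of_nonneg (by positivity)]
    exact rpow_le_pab ha (hβ x) _)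

lemma tendsto_integral_abs_rpow_sub (ha : 0 ≤ a) (hab : a ≤ b) {β : ι → Ω → ℝ}
    (hβm : ∀ i, Measurable (β i)) (hβ : ∀ i x, β i x ∈ Icc a b) {G : ι → Ω → ℝ} {K : Ω → ℝ}
    (hG : ∀ᶠ i in l, Measurable (G i)) (hKm : Measurable K)
    (hK : Integrable (fun x => pab a b (K x)) μ)
    (hGK : ∀ᶠ i in l, Integrable (fun x => pab a b (G i x - K x)) μ)
    (hlim : Tendsto (fun i => ∫ x, pab a b (G i x - K x) ∂μ) l (𝓝 0)) :
    Tendsto (fun i => ∫ x, |G i x| ^ β i x ∂μ - ∫ x, |K x| ^ β i x ∂μ) l (𝓝 0) := by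
  rw [Metric.tendsto_nhds]
  intro ε hε
  set P := ∫ x, pab a b (K x) ∂μ
  have hP : 0 ≤ P := integral_nonneg fun x => pab_nonneg a b _
  set η := ε / 2 / (P + 1)
  have hη : 0 < η := by positivity
  have hηP : η * P ≤ ε / 2 := calc
    η * P ≤ η * (P + 1) := by gcongr; linarith
    _ = ε / 2 := div_mul_cancel₀ _ (by positivity)
  obtain ⟨C, hC, hCη⟩ := exists_abs_rpow_sub_rpow_le (ha.trans hab) hη
  have hsmall : ∀ᶠ i in l, C * ∫ x, pab a b (G i x - K x) ∂μ < ε / 2 :=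
    (hlim.const_mul C).eventually (gt_mem_nhds (by simpa using half_pos hε))
  filter_upwards [hG, hGK, hsmall] with i hGi hGKi hsmall
  have hGi' : Integrable (fun x => pab a b (G i x)) μ :=
    ((hGKi.add hK).const_mul (2 ^ b)).mono' (measurable_pab.comp hGi).aestronglyMeasurable
      (.of_forall fun x => by
        simpa [abs_of_nonneg (pab_nonneg a b _)] using pab_add_le ha hab (G i x - K x) (K x))
  have hpt : ∀ x, ‖|G i x| ^ β i x - |K x| ^ β i x‖ ≤
      η * pab a b (K x) + C * pab a b (G i x - K x) := fun x =>
    (hCη _ ⟨ha.trans (hβ i x).1, (hβ i x).2⟩ _ _).trans (add_le_add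
      (mul_le_mul_of_nonneg_left (rpow_le_pab ha (hβ i x) _) hη.le)
      (mul_le_mul_of_nonneg_left (rpow_le_pab ha (hβ i x) _) hC))
  rw [Real.dist_eq, sub_zero, ← integral_sub
    (integrable_abs_rpow_of_integrable_pab ha (hβm i) (hβ i) hGi hGi')
    (integrable_abs_rpow_of_integrable_pab ha (hβm i) (hβ i) hKm hK)]
  calc |∫ x, (|G i x| ^ β i x - |K x| ^ β i x) ∂μ|
      ≤ ∫ x, (η * pab a b (K x) + C * pab a b (G i x - K x)) ∂μ :=
        norm_integral_le_of_norm_le ((hK.const_mul η).add (hGKi.const_mul C)) (.of_forall hpt)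
    _ = η * P + C * ∫ x, pab a b (G i x - K x) ∂μ := by
        rw [integral_add (hK.const_mul η) (hGKi.const_mul C), integral_const_mul,
          integral_const_mul]
    _ < ε := by linarith

lemma tendsto_integral_abs_rpow_of_tendsto [l.IsCountablyGenerated] (ha : 0 ≤ a)
    {β : ι → Ω → ℝ} {γ : Ω → ℝ} (hβm : ∀ i, Measurable (β i)) (hβ : ∀ i x, β i x ∈ Icc a b)
    (hγ : ∀ x, 0 < γ x) (hβγ : ∀ x, Tendsto (fun i => β i x) l (𝓝 (γ x))) {K : Ω → ℝ}
    (hKm : Measurable K) (hK : Integrable (fun x => pab a b (K x)) μ) :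
    Tendsto (fun i => ∫ x, |K x| ^ β i x ∂μ) l (𝓝 (∫ x, |K x| ^ γ x ∂μ)) :=
  tendsto_integral_filter_of_dominated_convergence _
    (.of_forall fun i => (hKm.abs.pow (hβm i)).aestronglyMeasurable)
    (.of_forall fun i => .of_forall fun x => by
      rw [Real.norm_eq_abs, abs_of_nonneg (by positivity)]
      exact rpow_le_pab ha (hβ i x) _)
    hK (.of_forall fun x => tendsto_const_nhds.rpow (hβγ x) (Or.inr (hγ x)))

theorem tendsto_integral_abs_rpow [l.IsCountablyGenerated] (ha : 0 ≤ a) (hab : a ≤ b)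
    {β : ι → Ω → ℝ} {γ : Ω → ℝ} (hβm : ∀ i, Measurable (β i)) (hβ : ∀ i x, β i x ∈ Icc a b)
    (hγ : ∀ x, 0 < γ x) (hβγ : ∀ x, Tendsto (fun i => β i x) l (𝓝 (γ x)))
    {G : ι → Ω → ℝ} {K : Ω → ℝ} (hG : ∀ᶠ i in l, Measurable (G i)) (hKm : Measurable K)
    (hK : Integrable (fun x => pab a b (K x)) μ)
    (hGK : ∀ᶠ i in l, Integrable (fun x => pab a b (G i x - K x)) μ)
    (hlim : Tendsto (fun i => ∫ x, pab a b (G i x - K x) ∂μ) l (𝓝 0)) :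
    Tendsto (fun i => ∫ x, |G i x| ^ β i x ∂μ) l (𝓝 (∫ x, |K x| ^ γ x ∂μ)) := by
  simpa using (tendsto_integral_abs_rpow_sub ha hab hβm hβ hG hKm hK hGK hlim).add
    (tendsto_integral_abs_rpow_of_tendsto ha hβm hβ hγ hβγ hKm hK)

end Convergence

end

theorem multistable_localisability_exponent_limit_general (a b : ℝ) (ha : 0 < a) (hab : a ≤ b)
    (α : ℝ → ℝ) (hαc : Continuous α) (hα : ∀ x, α x ∈ Set.Icc a b)
    (u h₀ : ℝ)
    (f : ℝ → ℝ → ℝ) (hf : ∀ t, MemFab a b (f t))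
    (k : ℝ → ℝ → ℝ) (hk : ∀ t, MemFab a b (k t))
    (hlim : ∀ t : ℝ,
      Tendsto (fun r : ℝ => ∫ z : ℝ,
          pab a b ((f (u + r * t) (u + r * z) - f u (u + r * z)) /
            r ^ (h₀ - 1 / α (u + r * z)) - k t z))
        (𝓝[>] (0:ℝ)) (𝓝 0)) :
    ∀ (m : ℕ) (t θ : Fin m → ℝ),
      Tendsto (fun r : ℝ => ∫ z : ℝ,
          |∑ j, θ j * r ^ (-h₀ + 1 / α (r * z + u)) *
            (f (u + r * t j) (r * z + u) - f u (r * z + u))| ^ α (r * z + u))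
        (𝓝[>] (0:ℝ)) (𝓝 (∫ z : ℝ, |∑ j, θ j * k (t j) z| ^ α u)) := by
  intro m t θ
  set q : ℝ → ℝ → ℝ → ℝ := fun r s z =>
    (f (u + r * s) (u + r * z) - f u (u + r * z)) / r ^ (h₀ - 1 / α (u + r * z))
  have hexp : ∀ x, h₀ - 1 / α x ∈ Icc (h₀ - 1 / a) (h₀ - 1 / b) := fun x =>
    ⟨sub_le_sub_left (one_div_le_one_div_of_le ha (hα x).1) h₀,
      sub_le_sub_left (one_div_le_one_div_of_le (ha.trans_le (hα x).1) (hα x).2) h₀⟩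
  have hq : ∀ᶠ r in 𝓝[>] 0, ∀ s, MemFab a b (q r s) :=
    eventually_mem_nhdsWithin.mono fun r hr s =>
      (((hf _).sub ha.le hab (hf u)).comp_add_mul u hr.ne').div_rpow ha.le hab
        (by fun_prop) hr fun z => hexp _
  have hK := MemFab.sum_mul ha hab Finset.univ θ fun j _ => hk (t j)
  have hG := hq.mono fun r hr => MemFab.sum_mul ha hab Finset.univ θ fun j _ => hr (t j)
  have hlimG : Tendsto (fun r => ∫ z, pab a b (∑ j, θ j * q r (t j) z - ∑ j, θ j * k (t j) z))
      (𝓝[>] 0) (𝓝 0) := by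
    simp_rw [← Finset.sum_sub_distrib, ← mul_sub]
    exact tendsto_integral_pab_sum_mul ha hab _ θ
      (fun j _ => hq.mono fun r hr => ((hr (t j)).sub ha.le hab (hk (t j))).2) fun j _ => hlim (t j)
  have hαu : ∀ z, Tendsto (fun r => α (u + r * z)) (𝓝[>] 0) (𝓝 (α u)) := fun z => by
    simpa using ((by fun_prop : Continuous fun r => α (u + r * z)).tendsto 0).mono_left
      nhdsWithin_le_nhds
  refine (tendsto_integral_abs_rpow ha.le hab (fun r => by fun_prop) (fun r z => hα _)
    (fun _ => ha.trans_le (hα u).1) hαu (hG.mono fun r hr => hr.1) hK.1 hK.2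
    (hG.mono fun r hr => (hr.sub ha.le hab hK).2) hlimG).congr' ?_
  filter_upwards [self_mem_nhdsWithin] with r (hr : 0 < r)
  refine integral_congr_ae (.of_forall fun z => ?_)
  simp only [q, add_comm (r * z) u, mul_assoc, neg_add_eq_sub, ← neg_sub h₀,
    Real.rpow_neg hr.le, div_eq_inv_mul]

/-- under the kernel convergence condition (3.4), the exponents of the
characteristic functions of the rescaled increments converge:
`∫ |Σ_j θ_j r^{−h₀+1/α(rz+u)}(f(u+rt_j,rz+u) − f(u,rz+u))|^{α(rz+u)} dz
  → ∫ |Σ_j θ_j k(t_j,z)|^{α(u)} dz` as `r → 0⁺`. -/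
theorem multistable_localisability_exponent_limit (a b : ℝ) (ha : 0 < a) (hab : a ≤ b)
    (hb : b ≤ 2)
    (α : ℝ → ℝ) (hαc : Continuous α) (hα : ∀ x, α x ∈ Set.Icc a b)
    (u h₀ : ℝ) (hh₀ : 0 < h₀)
    (f : ℝ → ℝ → ℝ) (hf : ∀ t, MemFab a b (f t))
    (k : ℝ → ℝ → ℝ) (hkm : Measurable (Function.uncurry k)) (hk : ∀ t, MemFab a b (k t))
    (hlim : ∀ t : ℝ,
      Tendsto (fun r : ℝ => ∫ z : ℝ,
          pab a b ((f (u + r * t) (u + r * z) - f u (u + r * z)) /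
            r ^ (h₀ - 1 / α (u + r * z)) - k t z))
        (𝓝[>] (0:ℝ)) (𝓝 0)) :
    ∀ (m : ℕ) (t θ : Fin m → ℝ),
      Tendsto (fun r : ℝ => ∫ z : ℝ,
          |∑ j, θ j * r ^ (-h₀ + 1 / α (r * z + u)) *
            (f (u + r * t j) (r * z + u) - f u (r * z + u))| ^ α (r * z + u))
        (𝓝[>] (0:ℝ)) (𝓝 (∫ z : ℝ, |∑ j, θ j * k (t j) z| ^ α u)) :=
  multistable_localisability_exponent_limit_general a b ha hab α hαc hα u h₀ f hf k hk hlim
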